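/- Fix reals S_A>0, θ>0, λ with 0<λ<λ_th, set B=1, and fix V with v_th(λ,0) < V ≤ 1. Then any global minimizer (ζ*,S_M*) of f over [0,∞)×[0,∞) satisfies: 0 < ζ* < min{1, 2·ln(V/√(λθ))}; S_M* = (e^{−ζ*/2}/√(λθ) − 1/V)·V·S_A/(1+V·S_A); and ζ* is the unique ζ ∈ (0, min{1, 2·ln(V/√(λθ))}) satisfying (−V·S_A/(1+V·S_A))·( V − e^{ζ/2}·√(λθ)·(2−ζ)/(1−ζ) + (e^{ζ}/(1−ζ))·λθ/V ) + λ·e^{ζ}/(1−ζ) = 0. -/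

import Mathlib

/-- Posterior variance update: `ν̂(V,Λ) = V/(1+V·Λ)`. -/
noncomputable def nuhat (V Lam : ℝ) : ℝ := V / (1 + V * Lam)

/-- Decentralized myopic cost `f(ζ,S_M)` with success probability
`ρ(ζ) = ζ·e^{−ζ}` and `B` channels. -/
noncomputable def fdec (SA th lam V : ℝ) (B : ℕ) (zeta SM : ℝ) : ℝ :=
  (∑ r ∈ Finset.range (B + 1),
    (B.choose r : ℝ) * (zeta * Real.exp (-zeta)) ^ r *
      (1 - zeta * Real.exp (-zeta)) ^ (B - r) *
      nuhat V ((r : ℝ) * SA * SM / (SA + SM))) +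
  lam * zeta * (B : ℝ) * (1 + th * SM)

/-- The threshold `v_th(λ,0)`. -/
noncomputable def vth0 (SA th lam : ℝ) : ℝ :=
  Real.sqrt (lam * th) + lam / 2 +
    Real.sqrt lam * Real.sqrt (Real.sqrt (lam * th) + lam / 4 + 1 / SA)

/-!
With `s = √(λθ)`, `b = S_A/(1+V S_A)` and `D = S_A + S_M(1+V S_A)`, the cost for `B = 1` is
`f(ζ,S_M) = V + λζ - bζ(e^{-ζ/2}V - s)² + ζ(e^{-ζ/2}V S_A - sD)²/((1+V S_A)D)`.
While the gap `e^{-ζ/2}V - s` is nonnegative the last square can be made zero by the choice of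
`S_M`, leaving the reduced cost `F(ζ) = V + λζ - bζ·gap²`; once the gap is nonpositive,
`f ≥ V + λζ`.
The threshold `v_th < V` gives `F'(0) = λ - b(V-s)² < 0`, so the minimum lies below
`V = f(0,·)`, hence at an interior point with positive gap, which is a root of `F'`. The stated
equation is `F'(ζ)·e^ζ/(1-ζ) = 0`.
-/

open Real Set Filter Topology

noncomputable def gap (V s t : ℝ) : ℝ := exp (-t / 2) * V - s

noncomputable def reducedCost (b V s lam t : ℝ) : ℝ := V + lam * t - b * t * gap V s t ^ 2

noncomputable def reducedCostDeriv (b V s lam t : ℝ) : ℝ :=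
  lam - b * gap V s t * ((1 - t) * gap V s t - t * s)

noncomputable def optimalSM (SA V s t : ℝ) : ℝ :=
  (exp (-t / 2) / s - 1 / V) * V * SA / (1 + V * SA)

lemma hasDerivAt_gap (V s t : ℝ) : HasDerivAt (gap V s) (-(gap V s t + s) / 2) t := by
  have hinner : HasDerivAt (fun x : ℝ => -x / 2) (-1 / 2) t := by
    simpa using (hasDerivAt_id t).neg.div_const 2
  exact ((hinner.exp.mul_const V).sub_const s).congr_deriv (by rw [gap]; ring)

lemma hasDerivAt_reducedCost (b V s lam t : ℝ) :
    HasDerivAt (reducedCost b V s lam) (reducedCostDeriv b V s lam t) t := by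
  have hE := hasDerivAt_gap V s t
  exact ((((hasDerivAt_id' t).const_mul lam).const_add V).sub
    (((hasDerivAt_id' t).const_mul b).mul (hE.pow 2))).congr_deriv
    (by rw [reducedCostDeriv, Pi.pow_apply]; ring)

@[fun_prop]
lemma continuous_gap (V s : ℝ) : Continuous (gap V s) := by
  unfold gap
  fun_prop

lemma gap_strictAnti {V : ℝ} (hV : 0 < V) (s : ℝ) : StrictAnti (gap V s) := fun _ _ h => by
  simp only [gap]
  gcongr

lemma gap_pos_iff {V s : ℝ} (hV : 0 < V) (hs : 0 < s) (t : ℝ) :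
    0 < gap V s t ↔ t < 2 * log (V / s) := by
  rw [gap, sub_pos, ← div_lt_iff₀ hV, ← log_lt_iff_lt_exp (div_pos hs hV),
    log_div hs.ne' hV.ne', log_div hV.ne' hs.ne']
  constructor <;> intro <;> linarith

lemma gap_zero (V s : ℝ) : gap V s 0 = V - s := by simp [gap]

lemma fdec_one_eq {SA th lam V s : ℝ} (hSA : 0 < SA) (hV : 0 < V) (hs2 : s ^ 2 = lam * th)
    (t : ℝ) {SM : ℝ} (hSM : 0 ≤ SM) :
    fdec SA th lam V 1 t SM = reducedCost (SA / (1 + V * SA)) V s lam t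
      + t * (exp (-t / 2) * V * SA - s * (SA + SM * (1 + V * SA))) ^ 2 /
          ((1 + V * SA) * (SA + SM * (1 + V * SA))) := by
  have hexp : exp (-t) = exp (-t / 2) ^ 2 := by rw [← exp_nat_mul]; ring_nf
  have h1 : SA + SM ≠ 0 := by positivity
  have h2 : SA + SM * (1 + V * SA) ≠ 0 := by positivity
  have h3 : 1 + V * (SA * SM / (SA + SM)) ≠ 0 := by positivity
  have hcost : fdec SA th lam V 1 t SM = V + lam * t - t * exp (-t / 2) ^ 2 * V
      + t * exp (-t / 2) ^ 2 * (V / (1 + V * (SA * SM / (SA + SM)))) + t * s ^ 2 * SM := by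
    simp only [fdec, nuhat, Finset.sum_range_succ, Finset.sum_range_zero, hexp, hs2]
    norm_num
    ring
  rw [hcost, reducedCost, gap]
  field_simp
  ring

lemma fdec_one_zero (SA th lam V SM : ℝ) : fdec SA th lam V 1 0 SM = V := by
  simp [fdec, nuhat, Finset.sum_range_succ]

lemma optimalSM_eq {SA V s : ℝ} (hV : 0 < V) (hs : 0 < s) (t : ℝ) :
    optimalSM SA V s t = gap V s t * SA / (s * (1 + V * SA)) := by
  rw [optimalSM, gap]
  field_simp

lemma optimalSM_nonneg {SA V s t : ℝ} (hSA : 0 < SA) (hV : 0 < V) (hs : 0 < s)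
    (hgap : 0 ≤ gap V s t) : 0 ≤ optimalSM SA V s t := by
  rw [optimalSM_eq hV hs]
  exact div_nonneg (mul_nonneg hgap hSA.le) (by positivity)

lemma optimalSM_spec {SA V s : ℝ} (hSA : 0 < SA) (hV : 0 < V) (hs : 0 < s) (t : ℝ) :
    exp (-t / 2) * V * SA - s * (SA + optimalSM SA V s t * (1 + V * SA)) = 0 := by
  have : 1 + V * SA ≠ 0 := by positivity
  rw [optimalSM_eq hV hs, gap]
  field_simp
  ring

lemma fdec_one_optimalSM {SA th lam V s t : ℝ} (hSA : 0 < SA) (hV : 0 < V) (hs : 0 < s)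
    (hs2 : s ^ 2 = lam * th) (hgap : 0 ≤ gap V s t) :
    fdec SA th lam V 1 t (optimalSM SA V s t) = reducedCost (SA / (1 + V * SA)) V s lam t := by
  rw [fdec_one_eq hSA hV hs2 t (optimalSM_nonneg hSA hV hs hgap), optimalSM_spec hSA hV hs]
  simp

lemma eq_optimalSM_of_fdec_one_le {SA th lam V s t SM : ℝ} (hSA : 0 < SA) (hV : 0 < V)
    (hs : 0 < s) (hs2 : s ^ 2 = lam * th) (ht : 0 < t) (hSM : 0 ≤ SM) (hgap : 0 ≤ gap V s t)
    (hle : fdec SA th lam V 1 t SM ≤ fdec SA th lam V 1 t (optimalSM SA V s t)) :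
    SM = optimalSM SA V s t := by
  rw [fdec_one_optimalSM hSA hV hs hs2 hgap, fdec_one_eq hSA hV hs2 t hSM] at hle
  have hX : exp (-t / 2) * V * SA - s * (SA + SM * (1 + V * SA)) = 0 := by
    by_contra hne
    have : 0 < t * (exp (-t / 2) * V * SA - s * (SA + SM * (1 + V * SA))) ^ 2 /
        ((1 + V * SA) * (SA + SM * (1 + V * SA))) := by positivity
    linarith
  have hb : s * (1 + V * SA) ≠ 0 := by positivity
  rw [optimalSM_eq hV hs, eq_div_iff hb, gap]
  linear_combination -hX

lemma add_mul_le_fdec_one_of_gap_nonpos {SA th lam V s t SM : ℝ} (hSA : 0 < SA) (hV : 0 < V)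
    (hs2 : s ^ 2 = lam * th) (ht : 0 ≤ t) (hSM : 0 ≤ SM) (hgap : gap V s t ≤ 0) :
    V + lam * t ≤ fdec SA th lam V 1 t SM := by
  rw [fdec_one_eq hSA hV hs2 t hSM, reducedCost]
  rw [gap] at hgap ⊢
  set u := exp (-t / 2)
  set D := SA + SM * (1 + V * SA)
  have hu : 0 < u := exp_pos _
  have hD : 0 < D := by positivity
  have hDSA : 0 ≤ D - SA := by simp only [D, add_sub_cancel_left]; positivity
  have hsq : u ^ 2 * V ^ 2 ≤ s ^ 2 := by nlinarith [mul_pos hu hV]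
  have hexcess : 0 ≤ (D - SA) * (s ^ 2 * D - u ^ 2 * V ^ 2 * SA) / ((1 + V * SA) * D) := by
    have : u ^ 2 * V ^ 2 * SA ≤ s ^ 2 * D := by
      nlinarith [mul_le_mul_of_nonneg_right hsq hD.le,
        mul_nonneg (by positivity : 0 ≤ u ^ 2 * V ^ 2) hDSA]
    exact div_nonneg (mul_nonneg hDSA (by linarith)) (by positivity)
  have hid : t * (u * V * SA - s * D) ^ 2 / ((1 + V * SA) * D)
        - SA / (1 + V * SA) * t * (u * V - s) ^ 2
      = t * ((D - SA) * (s ^ 2 * D - u ^ 2 * V ^ 2 * SA) / ((1 + V * SA) * D)) := by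
    field_simp
    ring
  linarith [mul_nonneg ht hexcess]

lemma exists_reducedCost_lt {b V s lam : ℝ} (hsV : s < V) (hgain : lam < b * (V - s) ^ 2) :
    ∃ t, 0 < t ∧ 0 < gap V s t ∧ reducedCost b V s lam t < V := by
  have hneg : ∀ᶠ t in 𝓝 0, lam - b * gap V s t ^ 2 < 0 :=
    (by fun_prop : Continuous fun t => lam - b * gap V s t ^ 2).continuousAt.eventually_lt_const
      (by beta_reduce; rw [gap_zero]; linarith)
  have hpos : ∀ᶠ t in 𝓝 0, 0 < gap V s t :=
    (continuous_gap V s).continuousAt.eventually_const_lt (by rw [gap_zero]; linarith)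
  obtain ⟨t, ⟨hnegt, hpost⟩, ht⟩ :=
    ((hneg.and hpos).filter_mono nhdsWithin_le_nhds |>.and self_mem_nhdsWithin).exists
      (f := 𝓝[>] (0 : ℝ))
  refine ⟨t, ht, hpost, ?_⟩
  have hsplit : reducedCost b V s lam t = V + t * (lam - b * gap V s t ^ 2) := by
    rw [reducedCost]; ring
  rw [hsplit]
  nlinarith [mul_neg_of_pos_of_neg (show (0 : ℝ) < t from ht) hnegt]

lemma sqrt_mul_lt_of_vth0_lt {SA th lam V : ℝ} (hlam : 0 ≤ lam) (hVl : vth0 SA th lam < V) :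
    √(lam * th) < V := by
  have : 0 ≤ √lam * √(√(lam * th) + lam / 4 + 1 / SA) := by positivity
  rw [vth0] at hVl
  linarith

lemma lt_gain_mul_sq_of_vth0_lt {SA th lam V : ℝ} (hSA : 0 < SA) (hlam : 0 ≤ lam)
    (hVl : vth0 SA th lam < V) : lam < SA / (1 + V * SA) * (V - √(lam * th)) ^ 2 := by
  set s := √(lam * th)
  have hsV : s < V := sqrt_mul_lt_of_vth0_lt hlam hVl
  have hV : 0 < V := (sqrt_nonneg _).trans_lt hsV
  rw [vth0] at hVl
  have hroot : 0 ≤ √lam * √(s + lam / 4 + 1 / SA) := by positivity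
  have hsq : (√lam * √(s + lam / 4 + 1 / SA)) ^ 2 = lam * (s + lam / 4 + 1 / SA) := by
    rw [mul_pow, sq_sqrt hlam, sq_sqrt (by positivity)]
  -- squaring `V - s - λ/2 > √λ √(s + λ/4 + 1/SA)` gives `(V - s)² > λ (V + 1/SA)`
  have hkey : lam * (V + 1 / SA) < (V - s) ^ 2 := by
    have hlt : √lam * √(s + lam / 4 + 1 / SA) < V - s - lam / 2 := by linarith
    nlinarith [pow_lt_pow_left₀ hlt hroot two_ne_zero]
  rw [div_mul_eq_mul_div, lt_div_iff₀ (by positivity)]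
  have : lam * (1 + V * SA) = SA * (lam * (V + 1 / SA)) := by field_simp; ring
  rw [this]
  exact mul_lt_mul_of_pos_left hkey hSA

lemma stationarity_eq {SA th lam V s t : ℝ} (hs2 : s ^ 2 = lam * th) (hV : 0 < V)
    (hSA : 0 < SA) (ht : t ≠ 1) :
    (-V * SA / (1 + V * SA)) *
        (V - exp (t / 2) * s * (2 - t) / (1 - t) + (exp t / (1 - t)) * (lam * th / V)) +
      lam * exp t / (1 - t)
    = reducedCostDeriv (SA / (1 + V * SA)) V s lam t * (exp t / (1 - t)) := by
  have h1 : exp t = exp (t / 2) * exp (t / 2) := by rw [← exp_add]; ring_nf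
  have h2 : exp (-t / 2) = (exp (t / 2))⁻¹ := by rw [← exp_neg]; ring_nf
  have h3 : 1 - t ≠ 0 := sub_ne_zero.mpr ht.symm
  have h4 : 1 + V * SA ≠ 0 := by positivity
  rw [← hs2, reducedCostDeriv, gap, h2, h1]
  field_simp
  ring

lemma lt_one_of_reducedCostDeriv_eq_zero {b V s lam t : ℝ} (hb : 0 < b) (hs : 0 < s)
    (hlam : 0 < lam) (ht : 0 < t) (hgap : 0 < gap V s t)
    (hroot : reducedCostDeriv b V s lam t = 0) : t < 1 := by
  rw [reducedCostDeriv] at hroot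
  by_contra! h1
  have : (1 - t) * gap V s t - t * s < 0 := by nlinarith [mul_pos ht hs]
  nlinarith [mul_pos hb hgap]

-- At a root, `b · gap · ((1 - t) gap - t s) = λ > 0`; both factors are positive and strictly
-- decreasing in `t` on `(0, 1)`, so there is no second root.
lemma reducedCostDeriv_neg_of_lt_root {b V s lam t₁ t₂ : ℝ} (hb : 0 < b) (hV : 0 < V)
    (hs : 0 < s) (hlam : 0 < lam) (h₁₂ : t₁ < t₂) (h₂ : t₂ < 1) (hgap : 0 < gap V s t₂)
    (hroot : reducedCostDeriv b V s lam t₂ = 0) : reducedCostDeriv b V s lam t₁ < 0 := by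
  rw [reducedCostDeriv] at hroot ⊢
  have hanti : gap V s t₂ < gap V s t₁ := gap_strictAnti hV s h₁₂
  have hfac₂ : 0 < (1 - t₂) * gap V s t₂ - t₂ * s := by
    by_contra! h
    nlinarith [mul_pos hb hgap]
  have hfac : (1 - t₂) * gap V s t₂ - t₂ * s < (1 - t₁) * gap V s t₁ - t₁ * s := by
    nlinarith [mul_lt_mul_of_pos_left hanti (by linarith : (0 : ℝ) < 1 - t₂)]
  nlinarith [mul_lt_mul'' hanti hfac hgap.le hfac₂.le]

lemma reducedCostDeriv_root_unique {b V s lam t₁ t₂ : ℝ} (hb : 0 < b) (hV : 0 < V)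
    (hs : 0 < s) (hlam : 0 < lam) (h₁ : t₁ < 1) (h₂ : t₂ < 1) (hgap₁ : 0 < gap V s t₁)
    (hgap₂ : 0 < gap V s t₂) (hroot₁ : reducedCostDeriv b V s lam t₁ = 0)
    (hroot₂ : reducedCostDeriv b V s lam t₂ = 0) : t₁ = t₂ := by
  rcases lt_trichotomy t₁ t₂ with h | h | h
  · exact absurd hroot₁ (reducedCostDeriv_neg_of_lt_root hb hV hs hlam h h₂ hgap₂ hroot₂).ne
  · exact h
  · exact absurd hroot₂ (reducedCostDeriv_neg_of_lt_root hb hV hs hlam h h₁ hgap₁ hroot₁).ne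

lemma pos_and_gap_pos_of_minimizer {SA th lam V s zs SMs : ℝ} (hSA : 0 < SA) (hs : 0 < s)
    (hs2 : s ^ 2 = lam * th) (hlam : 0 < lam) (hsV : s < V)
    (hgain : lam < SA / (1 + V * SA) * (V - s) ^ 2) (hzs : 0 ≤ zs) (hSMs : 0 ≤ SMs)
    (hmin : ∀ zeta SM : ℝ, 0 ≤ zeta → 0 ≤ SM →
      fdec SA th lam V 1 zs SMs ≤ fdec SA th lam V 1 zeta SM) :
    0 < zs ∧ 0 < gap V s zs := by
  have hV : 0 < V := hs.trans hsV
  obtain ⟨t, ht, hgap, hcost⟩ := exists_reducedCost_lt hsV hgain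
  have hlt : fdec SA th lam V 1 zs SMs < V := by
    refine (hmin t _ ht.le (optimalSM_nonneg hSA hV hs hgap.le)).trans_lt ?_
    rwa [fdec_one_optimalSM hSA hV hs hs2 hgap.le]
  have hzs_pos : 0 < zs := hzs.lt_of_ne <| by
    rintro rfl
    rw [fdec_one_zero] at hlt
    exact lt_irrefl V hlt
  refine ⟨hzs_pos, lt_of_not_ge fun hgap_zs => ?_⟩
  linarith [add_mul_le_fdec_one_of_gap_nonpos hSA hV hs2 hzs hSMs hgap_zs, mul_pos hlam hzs_pos]

lemma isLocalMin_reducedCost_of_minimizer {SA th lam V s zs : ℝ} (hSA : 0 < SA)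
    (hV : 0 < V) (hs : 0 < s) (hs2 : s ^ 2 = lam * th) (hzs : 0 < zs) (hgap : 0 < gap V s zs)
    (hmin : ∀ zeta SM : ℝ, 0 ≤ zeta → 0 ≤ SM →
      fdec SA th lam V 1 zs (optimalSM SA V s zs) ≤ fdec SA th lam V 1 zeta SM) :
    IsLocalMin (reducedCost (SA / (1 + V * SA)) V s lam) zs := by
  have hopen : IsOpen {t | 0 < t ∧ 0 < gap V s t} :=
    (isOpen_lt continuous_const continuous_id).inter
      (isOpen_lt continuous_const (continuous_gap V s))
  filter_upwards [hopen.mem_nhds ⟨hzs, hgap⟩] with t ⟨ht, hgap_t⟩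
  rw [← fdec_one_optimalSM hSA hV hs hs2 hgap.le, ← fdec_one_optimalSM hSA hV hs hs2 hgap_t.le]
  exact hmin t _ ht.le (optimalSM_nonneg hSA hV hs hgap_t.le)

theorem stmt_13_general (SA th lam V : ℝ) (hSA : 0 < SA) (hth : 0 < th) (hlam : 0 < lam)
    (hVl : vth0 SA th lam < V)
    (zs SMs : ℝ) (hzs : 0 ≤ zs) (hSMs : 0 ≤ SMs)
    (hmin : ∀ zeta SM : ℝ, 0 ≤ zeta → 0 ≤ SM →
      fdec SA th lam V 1 zs SMs ≤ fdec SA th lam V 1 zeta SM) :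
    0 < zs ∧ zs < min 1 (2 * Real.log (V / Real.sqrt (lam * th))) ∧
      SMs = (Real.exp (-zs / 2) / Real.sqrt (lam * th) - 1 / V) * V * SA / (1 + V * SA) ∧
      ((-V * SA / (1 + V * SA)) *
          (V - Real.exp (zs / 2) * Real.sqrt (lam * th) * (2 - zs) / (1 - zs) +
            (Real.exp zs / (1 - zs)) * (lam * th / V)) +
        lam * Real.exp zs / (1 - zs) = 0) ∧
      (∀ zeta ∈ Set.Ioo 0 (min 1 (2 * Real.log (V / Real.sqrt (lam * th)))),
        ((-V * SA / (1 + V * SA)) *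
            (V - Real.exp (zeta / 2) * Real.sqrt (lam * th) * (2 - zeta) / (1 - zeta) +
              (Real.exp zeta / (1 - zeta)) * (lam * th / V)) +
          lam * Real.exp zeta / (1 - zeta) = 0) → zeta = zs) := by
  set s := √(lam * th)
  have hs : 0 < s := sqrt_pos.2 (mul_pos hlam hth)
  have hs2 : s ^ 2 = lam * th := sq_sqrt (mul_pos hlam hth).le
  have hsV : s < V := sqrt_mul_lt_of_vth0_lt hlam.le hVl
  have hV : 0 < V := hs.trans hsV
  have hb : 0 < SA / (1 + V * SA) := by positivity
  obtain ⟨hzs_pos, hgap⟩ := pos_and_gap_pos_of_minimizer hSA hs hs2 hlam hsV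
    (lt_gain_mul_sq_of_vth0_lt hSA hlam.le hVl) hzs hSMs hmin
  have hSM : SMs = optimalSM SA V s zs :=
    eq_optimalSM_of_fdec_one_le hSA hV hs hs2 hzs_pos hSMs hgap.le
      (hmin _ _ hzs (optimalSM_nonneg hSA hV hs hgap.le))
  have hroot : reducedCostDeriv (SA / (1 + V * SA)) V s lam zs = 0 :=
    (isLocalMin_reducedCost_of_minimizer hSA hV hs hs2 hzs_pos hgap
      (hSM ▸ hmin)).hasDerivAt_eq_zero (hasDerivAt_reducedCost _ V s lam zs)
  have hzs1 : zs < 1 := lt_one_of_reducedCostDeriv_eq_zero hb hs hlam hzs_pos hgap hroot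
  refine ⟨hzs_pos, lt_min hzs1 ((gap_pos_iff hV hs zs).1 hgap), hSM, ?_, fun t ht hroot_t => ?_⟩
  · rw [stationarity_eq hs2 hV hSA hzs1.ne, hroot, zero_mul]
  · have ht1 : t < 1 := ht.2.trans_le (min_le_left _ _)
    have hgap_t : 0 < gap V s t := (gap_pos_iff hV hs t).2 (ht.2.trans_le (min_le_right _ _))
    rw [stationarity_eq hs2 hV hSA ht1.ne] at hroot_t
    have hfactor : exp t / (1 - t) ≠ 0 := div_ne_zero (exp_ne_zero t) (sub_ne_zero.2 ht1.ne')
    exact reducedCostDeriv_root_unique hb hV hs hlam ht1 hzs1 hgap_t hgap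
      ((mul_eq_zero.1 hroot_t).resolve_right hfactor) hroot

/-- for `B = 1` and `v_th(λ,0) < V ≤ 1`, any global minimizer
`(ζ*,S_M*)` of the decentralized myopic cost over `[0,∞)²` satisfies
`0 < ζ* < min{1, 2·ln(V/√(λθ))}`, the closed-form for `S_M*`, and `ζ*` is the
unique root of the stated equation in `(0, min{1, 2·ln(V/√(λθ))})`. -/
theorem stmt_13 (SA th lam V : ℝ) (hSA : 0 < SA) (hth : 0 < th) (hlam : 0 < lam)
    (hlt : lam < 1 / (Real.sqrt (1 + 1 / SA) + Real.sqrt th) ^ 2)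
    (hVl : vth0 SA th lam < V) (hV1 : V ≤ 1)
    (zs SMs : ℝ) (hzs : 0 ≤ zs) (hSMs : 0 ≤ SMs)
    (hmin : ∀ zeta SM : ℝ, 0 ≤ zeta → 0 ≤ SM →
      fdec SA th lam V 1 zs SMs ≤ fdec SA th lam V 1 zeta SM) :
    0 < zs ∧ zs < min 1 (2 * Real.log (V / Real.sqrt (lam * th))) ∧
      SMs = (Real.exp (-zs / 2) / Real.sqrt (lam * th) - 1 / V) * V * SA / (1 + V * SA) ∧
      ((-V * SA / (1 + V * SA)) *
          (V - Real.exp (zs / 2) * Real.sqrt (lam * th) * (2 - zs) / (1 - zs) +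
            (Real.exp zs / (1 - zs)) * (lam * th / V)) +
        lam * Real.exp zs / (1 - zs) = 0) ∧
      (∀ zeta ∈ Set.Ioo 0 (min 1 (2 * Real.log (V / Real.sqrt (lam * th)))),
        ((-V * SA / (1 + V * SA)) *
            (V - Real.exp (zeta / 2) * Real.sqrt (lam * th) * (2 - zeta) / (1 - zeta) +
              (Real.exp zeta / (1 - zeta)) * (lam * th / V)) +
          lam * Real.exp zeta / (1 - zeta) = 0) → zeta = zs) :=
  stmt_13_general SA th lam V hSA hth hlam hVl zs SMs hzs hSMs hmin
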